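/- arXiv:1810.04816 — 2 statements merged into one kernel-verified Lean document; each statement's English description precedes it below -/
import Mathlib

section
/- In the hypergraph Chung-Lu model, the expected d-degree of vertex v_i equals |E_d| \cdot d \cdot deg(v_i)/vol(V), where the d-degree of v_i in a random hypergraph is \sum_{e \in F_d} m_e(v_i) \cdot 1_{\{e \text{ is an edge}\}}. -/
/-! Differentiating the multinomial theorem
`(∑ j, x j) ^ d = ∑ₘ multinomial m * ∏ j, x j ^ m j` with respect to `x i` gives
`∑ₘ m i * multinomial m * ∏ j, x j ^ m j = d * x i * (∑ j, x j) ^ (d - 1)`.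
Combinatorially, the derivative is the shift `m ↦ m + eᵢ` together with the identity
`(m i + 1) * multinomial (m + eᵢ) = (|m| + 1) * multinomial m`. At `x j = deg j / vol V`, whose
sum is `1`, the right-hand side is `d * deg i / vol V`. -/

open Finset
open scoped Nat

section

variable {ι : Type*} [DecidableEq ι] {s : Finset ι} {i : ι}

lemma Finset.prod_apply_add_single_one {M : Type*} [CommMonoid M] (f : ι → ℕ → M)
    (m : ι → ℕ) (hi : i ∈ s) :
    ∏ j ∈ s, f j ((m + Pi.single i 1 : ι → ℕ) j) =
      f i (m i + 1) * ∏ j ∈ s.erase i, f j (m j) := by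
  rw [← mul_prod_erase s _ hi, Pi.add_apply, Pi.single_eq_same]
  congr 1
  exact prod_congr rfl fun j hj => by
    rw [Pi.add_apply, Pi.single_eq_of_ne (ne_of_mem_erase hj), add_zero]

lemma Finset.sum_add_single_one (m : ι → ℕ) (hi : i ∈ s) :
    ∑ j ∈ s, (m + Pi.single i 1 : ι → ℕ) j = ∑ j ∈ s, m j + 1 := by
  simp [sum_add_distrib, hi]

lemma Finset.map_add_single_one_piAntidiag (hi : i ∈ s) (e : ℕ) :
    (piAntidiag s e).map (addRightEmbedding (Pi.single i 1)) =
      (piAntidiag s (e + 1)).filter (fun m => m i ≠ 0) := by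
  ext m
  simp only [mem_map, mem_filter, mem_piAntidiag, addRightEmbedding_apply]
  constructor
  · rintro ⟨m', ⟨rfl, hsupp⟩, rfl⟩
    refine ⟨⟨sum_add_single_one m' hi, fun j hj => ?_⟩, by simp⟩
    by_cases hji : j = i
    · exact hji ▸ hi
    · exact hsupp j (by simpa [Pi.single_eq_of_ne hji] using hj)
  · rintro ⟨⟨hsum, hsupp⟩, hmi⟩
    have hm : m - Pi.single i 1 + Pi.single i 1 = m := by
      ext j
      by_cases hji : j = i
      · subst hji
        simp only [Pi.add_apply, Pi.sub_apply, Pi.single_eq_same]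
        omega
      · simp [Pi.single_eq_of_ne hji]
    refine ⟨m - Pi.single i 1, ⟨?_, fun j hj => hsupp j fun h => hj (by simp [h])⟩, hm⟩
    have hsum' := sum_add_single_one (s := s) (m - Pi.single i 1) hi
    rw [hm, hsum] at hsum'
    change ∑ j ∈ s, (m - Pi.single i 1 : ι → ℕ) j = e
    omega

theorem Nat.succ_mul_multinomial_add_single_one (m : ι → ℕ) (hi : i ∈ s) :
    (m i + 1) * multinomial s (m + Pi.single i 1) = (∑ j ∈ s, m j + 1) * multinomial s m := by
  have hfact :
      ∏ j ∈ s, ((m + Pi.single i 1 : ι → ℕ) j)! = (m i + 1) * ∏ j ∈ s, (m j)! := by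
    rw [prod_apply_add_single_one (fun _ k => k !) m hi, factorial_succ, mul_assoc,
      mul_prod_erase s (fun j => (m j)!) hi]
  apply Nat.eq_of_mul_eq_mul_left (prod_pos fun j _ => (m j).factorial_pos)
  calc (∏ j ∈ s, (m j)!) * ((m i + 1) * multinomial s (m + Pi.single i 1))
      = (∏ j ∈ s, ((m + Pi.single i 1 : ι → ℕ) j)!) *
          multinomial s (m + Pi.single i 1) := by
        rw [hfact]; ring
    _ = (∑ j ∈ s, m j + 1)! := by rw [multinomial_spec, sum_add_single_one m hi]
    _ = (∏ j ∈ s, (m j)!) * ((∑ j ∈ s, m j + 1) * multinomial s m) := by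
        rw [factorial_succ, ← multinomial_spec]; ring

theorem Finset.sum_piAntidiag_apply_mul_multinomial_mul_prod_pow {R : Type*}
    [CommSemiring R] (x : ι → R) (hi : i ∈ s) (d : ℕ) :
    ∑ m ∈ piAntidiag s d, (m i : R) * Nat.multinomial s m * ∏ j ∈ s, x j ^ m j =
      d * x i * (∑ j ∈ s, x j) ^ (d - 1) := by
  cases d with
  | zero => simp
  | succ e =>
    rw [← sum_filter_of_ne (p := fun m => m i ≠ 0) fun m _ h hmi => h (by simp [hmi]),
      ← map_add_single_one_piAntidiag hi, sum_map, Nat.add_sub_cancel,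
      sum_pow_eq_sum_piAntidiag, mul_sum]
    refine sum_congr rfl fun m hm => ?_
    have hmult : ((m i : R) + 1) * Nat.multinomial s (m + Pi.single i 1) =
        (e + 1) * Nat.multinomial s m := by
      have hsum : ∑ j ∈ s, m j = e := (mem_piAntidiag.1 hm).1
      have h := congrArg (Nat.cast : ℕ → R) (Nat.succ_mul_multinomial_add_single_one m hi)
      rw [hsum] at h
      push_cast at h
      exact h
    rw [addRightEmbedding_apply, Pi.add_apply, Pi.single_eq_same,
      prod_apply_add_single_one (fun j k => x j ^ k) m hi,
      ← mul_prod_erase s (fun j => x j ^ m j) hi]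
    push_cast
    calc _ = ((m i : R) + 1) * Nat.multinomial s (m + Pi.single i 1) *
          (x i * (x i ^ m i * ∏ j ∈ s.erase i, x j ^ m j)) := by ring
      _ = _ := by rw [hmult]; ring

end

theorem chungLu_hypergraph_expected_d_degree_general {n : ℕ} (deg : Fin n → ℝ)
    (hvol : 0 < ∑ i, deg i) (d : ℕ) (Ed : ℕ)
    (i : Fin n) :
    ∑ m ∈ Finset.Nat.antidiagonalTuple n d,
      (m i : ℝ) * ((Ed : ℝ) * (Nat.multinomial Finset.univ m : ℝ) *
        ∏ j, (deg j / ∑ k, deg k) ^ m j)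
    = (Ed : ℝ) * d * (deg i / ∑ j, deg j) := by
  have hp : ∑ j, deg j / ∑ k, deg k = 1 := by rw [← sum_div, div_self hvol.ne']
  rw [← piAntidiag_univ_fin_eq_antidiagonalTuple]
  calc _ = (Ed : ℝ) * ∑ m ∈ piAntidiag univ d,
        (m i : ℝ) * Nat.multinomial univ m * ∏ j, (deg j / ∑ k, deg k) ^ m j := by
        rw [mul_sum]; exact sum_congr rfl fun m _ => by ring
    _ = _ := by
        rw [sum_piAntidiag_apply_mul_multinomial_mul_prod_pow _ (mem_univ i), hp, one_pow]
        ring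

/-- **Expected `d`-degree in the hypergraph Chung–Lu model.**
Each multiset `e` of size `d` over `[n]` (encoded by its multiplicity tuple `m`)
is independently an edge with probability
`P(e) = |E_d| ⬝ (d choose m_1,…,m_n) ⬝ ∏ i (p i) ^ m i` where `p i = deg v_i / vol V`.
The expected `d`-degree of vertex `v_i`, namely `∑_{e ∈ F_d} m_e(v_i) ⬝ P(e)`, equals
`|E_d| ⬝ d ⬝ deg v_i / vol V`. -/
theorem chungLu_hypergraph_expected_d_degree {n : ℕ} (deg : Fin n → ℝ)
    (hdeg : ∀ i, 0 ≤ deg i) (hvol : 0 < ∑ i, deg i) (d : ℕ) (Ed : ℕ)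
    (hP : ∀ m ∈ Finset.Nat.antidiagonalTuple n d,
      (Ed : ℝ) * (Nat.multinomial Finset.univ m : ℝ) *
        ∏ i, (deg i / ∑ j, deg j) ^ m i ≤ 1)
    (i : Fin n) :
    ∑ m ∈ Finset.Nat.antidiagonalTuple n d,
      (m i : ℝ) * ((Ed : ℝ) * (Nat.multinomial Finset.univ m : ℝ) *
        ∏ j, (deg j / ∑ k, deg k) ^ m j)
    = (Ed : ℝ) * d * (deg i / ∑ j, deg j) :=
  chungLu_hypergraph_expected_d_degree_general deg hvol d Ed i
end

section
/- Let H=(V,E) be a hypergraph. If a partition A of V maximizes the strict hypergraph modularity q_H(\cdot) over all partitions of V, then A equals p(H*) for some canonical representative H* \in S*(H); that is, every optimal partition is induced by the connected components of a sub-hypergraph of H whose edge set consists exactly of the edges internal to its own components. -/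
open Classical Finset

variable {V : Type*} [Fintype V] [DecidableEq V]

/-- The degree of a vertex in the hypergraph with edge set `E`:
the number of hyperedges containing it. -/
def hdeg (E : Finset (Finset V)) (v : V) : ℕ := (E.filter (fun e => v ∈ e)).card

/-- The volume of a set of vertices: the sum of their degrees. -/
noncomputable def hvol (E : Finset (Finset V)) (A : Finset V) : ℝ :=
  ∑ v ∈ A, (hdeg E v : ℝ)

/-- Strict hypergraph modularity of a partition `P`:
`q_H(P) = (1/|E|) ( ∑_{A ∈ P} |{e ∈ E : e ⊆ A}| - ∑_{d ≥ 2} |E_d| ∑_{A ∈ P} (vol A / vol V)^d )`,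
where the degree tax is written edgewise as `∑_{e ∈ E} ∑_{A ∈ P} (vol A / vol V)^{|e|}`. -/
noncomputable def hQ (E : Finset (Finset V)) (P : Finpartition (Finset.univ : Finset V)) : ℝ :=
  (1 / (E.card : ℝ)) *
    ((∑ A ∈ P.parts, ((E.filter (fun e => e ⊆ A)).card : ℝ)) -
      ∑ e ∈ E, ∑ A ∈ P.parts, (hvol E A / hvol E Finset.univ) ^ e.card)

/-- The edges of `E` internal to some part of the partition `P`. -/
def internalEdges (E : Finset (Finset V)) (P : Finpartition (Finset.univ : Finset V)) :
    Finset (Finset V) :=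
  E.filter (fun e => ∃ A ∈ P.parts, e ⊆ A)

/-- The partition of `V` into connected components of the hypergraph `(V, E')`
(two vertices are connected when joined by a path of hyperedges). -/
noncomputable def compPartition (E' : Finset (Finset V)) :
    Finpartition (Finset.univ : Finset V) :=
  Finpartition.ofSetoid (Relation.EqvGen.setoid (fun u v => ∃ e ∈ E', u ∈ e ∧ v ∈ e))

/-!
Let `P` be the component partition of the sub-hypergraph of edges internal to `A`. Then `P`
refines `A` and has the same internal edges, so the edge term of the modularity is unchanged.
The degree tax, however, strictly decreases under a proper refinement: writing
`∑_B vol(B)^d = ∑_v deg(v) · vol(part(v))^(d-1)`, every vertex's part can only shrink, and some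
part shrinks strictly. So `q_H(A) < q_H(P)` unless `A = P`.
-/

namespace Finpartition

variable {α : Type*} [DecidableEq α] {s : Finset α} {P Q : Finpartition s}

theorem part_subset_part_of_le (h : P ≤ Q) (a : α) : P.part a ⊆ Q.part a := by
  by_cases ha : a ∈ s
  · obtain ⟨c, hc, hPc⟩ := h (P.part_mem.2 ha)
    rwa [Q.part_eq_of_mem hc (hPc (P.mem_part_self.2 ha))]
  · simp [P.part_eq_empty.2 ha]

theorem parts_eq_image_part (P : Finpartition s) : P.parts = s.image P.part := by
  ext t
  refine ⟨fun ht => ?_, fun ht => ?_⟩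
  · obtain ⟨a, ha⟩ := P.nonempty_of_mem_parts ht
    exact mem_image.2 ⟨a, P.subset ht ha, P.part_eq_of_mem ht ha⟩
  · obtain ⟨a, ha, rfl⟩ := mem_image.1 ht
    exact P.part_mem.2 ha

theorem exists_part_ssubset_part_of_lt (h : P < Q) : ∃ a ∈ s, P.part a ⊂ Q.part a := by
  by_contra! hpart
  refine h.ne (Finpartition.ext ?_)
  rw [P.parts_eq_image_part, Q.parts_eq_image_part]
  exact image_congr fun a ha =>
    (part_subset_part_of_le h.le a).eq_of_not_ssubset (hpart a ha)

theorem sum_parts_sum_eq_sum_part {M : Type*} [AddCommMonoid M] (P : Finpartition s)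
    (f : Finset α → α → M) : ∑ t ∈ P.parts, ∑ a ∈ t, f t a = ∑ a ∈ s, f (P.part a) a := by
  calc ∑ t ∈ P.parts, ∑ a ∈ t, f t a = ∑ t ∈ P.parts, ∑ a ∈ t, f (P.part a) a :=
        sum_congr rfl fun t ht => sum_congr rfl fun a ha => by rw [P.part_eq_of_mem ht ha]
    _ = ∑ a ∈ P.parts.biUnion id, f (P.part a) a := (sum_biUnion P.disjoint).symm
    _ = ∑ a ∈ s, f (P.part a) a := by rw [P.biUnion_parts]

theorem sum_parts_sum_pow_succ {R : Type*} [CommSemiring R] (P : Finpartition s) (w : α → R)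
    (d : ℕ) :
    ∑ t ∈ P.parts, (∑ a ∈ t, w a) ^ (d + 1) = ∑ a ∈ s, w a * (∑ b ∈ P.part a, w b) ^ d := by
  simp_rw [pow_succ', sum_mul]
  exact P.sum_parts_sum_eq_sum_part fun t a => w a * (∑ b ∈ t, w b) ^ d

theorem sum_parts_sum_pow_lt_of_lt {R : Type*} [CommSemiring R] [PartialOrder R]
    [IsStrictOrderedRing R] (h : P < Q) {w : α → R} (hw : ∀ a ∈ s, 0 < w a) {d : ℕ}
    (hd : 2 ≤ d) :
    ∑ t ∈ P.parts, (∑ a ∈ t, w a) ^ d < ∑ t ∈ Q.parts, (∑ a ∈ t, w a) ^ d := by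
  obtain ⟨k, rfl⟩ : ∃ k, d = k + 1 + 1 := ⟨d - 2, by omega⟩
  rw [P.sum_parts_sum_pow_succ, Q.sum_parts_sum_pow_succ]
  have hw₀ : ∀ a ∈ s, 0 ≤ w a := fun a ha => (hw a ha).le
  have hvol₀ : ∀ a, 0 ≤ ∑ b ∈ P.part a, w b := fun a =>
    sum_nonneg fun b hb => hw₀ b (P.part_subset a hb)
  have hvol_le : ∀ a, ∑ b ∈ P.part a, w b ≤ ∑ b ∈ Q.part a, w b := fun a =>
    sum_le_sum_of_subset_of_nonneg (part_subset_part_of_le h.le a)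
      fun b hb _ => hw₀ b (Q.part_subset a hb)
  obtain ⟨a, ha, hssub⟩ := exists_part_ssubset_part_of_lt h
  obtain ⟨b, hbQ, hbP⟩ := exists_of_ssubset hssub
  have hvol_lt : ∑ b ∈ P.part a, w b < ∑ b ∈ Q.part a, w b :=
    sum_lt_sum_of_subset hssub.subset hbQ hbP (hw b (Q.part_subset a hbQ))
      fun c hc _ => hw₀ c (Q.part_subset a hc)
  refine sum_lt_sum (fun c hc => ?_) ⟨a, ha, ?_⟩
  · exact mul_le_mul_of_nonneg_left (pow_le_pow_left₀ (hvol₀ c) (hvol_le c) _) (hw₀ c hc)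
  · exact mul_lt_mul_of_pos_left (pow_lt_pow_left₀ hvol_lt (hvol₀ a) (by omega)) (hw a ha)

end Finpartition

section Hypergraph

variable (E : Finset (Finset V))

theorem card_internalEdges_eq_sum (hE : ∀ e ∈ E, e.Nonempty)
    (P : Finpartition (univ : Finset V)) :
    (internalEdges E P).card = ∑ t ∈ P.parts, (E.filter (fun e => e ⊆ t)).card := by
  have hbiUnion : internalEdges E P = P.parts.biUnion fun t => E.filter (fun e => e ⊆ t) := by
    ext e
    simp only [internalEdges, mem_filter, mem_biUnion]
    tauto
  rw [hbiUnion, card_biUnion]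
  intro t ht u hu htu
  refine disjoint_left.2 fun e het heu => htu ?_
  obtain ⟨v, hv⟩ := hE e (mem_filter.1 het).1
  exact P.eq_of_mem_parts ht hu ((mem_filter.1 het).2 hv) ((mem_filter.1 heu).2 hv)

theorem internalEdges_mono {P Q : Finpartition (univ : Finset V)} (h : P ≤ Q) :
    internalEdges E P ⊆ internalEdges E Q := by
  intro e he
  obtain ⟨heE, t, ht, het⟩ := mem_filter.1 he
  obtain ⟨u, hu, htu⟩ := h ht
  exact mem_filter.2 ⟨heE, u, hu, het.trans htu⟩

theorem mem_part_compPartition_iff {u v : V} :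
    v ∈ (compPartition E).part u ↔ Relation.EqvGen (fun u v => ∃ e ∈ E, u ∈ e ∧ v ∈ e) u v :=
  Finpartition.mem_part_ofSetoid_iff_rel

theorem compPartition_le {A : Finpartition (univ : Finset V)}
    (h : ∀ e ∈ E, ∃ t ∈ A.parts, e ⊆ t) : compPartition E ≤ A := by
  have hpart : ∀ u v, Relation.EqvGen (fun u v => ∃ e ∈ E, u ∈ e ∧ v ∈ e) u v →
      A.part u = A.part v := by
    intro u v huv
    induction huv with
    | rel a b hab =>
      obtain ⟨e, he, ha, hb⟩ := hab
      obtain ⟨t, ht, het⟩ := h e he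
      rw [A.part_eq_of_mem ht (het ha), A.part_eq_of_mem ht (het hb)]
    | refl => rfl
    | symm _ _ _ ih => exact ih.symm
    | trans _ _ _ _ _ ih₁ ih₂ => exact ih₁.trans ih₂
  intro B hB
  obtain ⟨v, hv⟩ := (compPartition E).nonempty_of_mem_parts hB
  refine ⟨A.part v, A.part_mem.2 (mem_univ v), fun u hu => ?_⟩
  rw [← (compPartition E).part_eq_of_mem hB hv, mem_part_compPartition_iff] at hu
  rw [hpart v u hu]
  exact A.mem_part_self.2 (mem_univ u)

theorem exists_part_compPartition_superset {e : Finset V} (he : e ∈ E) (hne : e.Nonempty) :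
    ∃ t ∈ (compPartition E).parts, e ⊆ t := by
  obtain ⟨v, hv⟩ := hne
  exact ⟨_, (compPartition E).part_mem.2 (mem_univ v), fun u hu =>
    (mem_part_compPartition_iff E).2 (.rel _ _ ⟨e, he, hv, hu⟩)⟩

theorem compPartition_internalEdges_le (A : Finpartition (univ : Finset V)) :
    compPartition (internalEdges E A) ≤ A :=
  compPartition_le _ fun _ he => (mem_filter.1 he).2

theorem internalEdges_compPartition_internalEdges (hE : ∀ e ∈ E, e.Nonempty)
    (A : Finpartition (univ : Finset V)) :
    internalEdges E (compPartition (internalEdges E A)) = internalEdges E A := by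
  refine (internalEdges_mono E (compPartition_internalEdges_le E A)).antisymm fun e he => ?_
  have heE := (mem_filter.1 he).1
  exact mem_filter.2 ⟨heE, exists_part_compPartition_superset _ he (hE e heE)⟩

theorem hQ_lt_hQ_of_lt (hne : E.Nonempty) (hsize : ∀ e ∈ E, 2 ≤ e.card)
    (hdpos : ∀ v : V, 0 < hdeg E v) {P Q : Finpartition (univ : Finset V)} (hPQ : P < Q)
    (hint : internalEdges E P = internalEdges E Q) : hQ E Q < hQ E P := by
  have hE : ∀ e ∈ E, e.Nonempty := fun e he => card_pos.1 (zero_lt_two.trans_le (hsize e he))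
  have hedge : ∑ t ∈ P.parts, ((E.filter (fun e => e ⊆ t)).card : ℝ) =
      ∑ t ∈ Q.parts, ((E.filter (fun e => e ⊆ t)).card : ℝ) := by
    rw [← Nat.cast_sum, ← Nat.cast_sum, ← card_internalEdges_eq_sum E hE,
      ← card_internalEdges_eq_sum E hE, hint]
  obtain ⟨e₀, he₀⟩ := hne
  obtain ⟨v₀, -⟩ := hE e₀ he₀
  have hvolV : 0 < hvol E univ :=
    sum_pos (fun v _ => by exact_mod_cast hdpos v) ⟨v₀, mem_univ v₀⟩
  have htax : ∀ e ∈ E, ∑ t ∈ P.parts, (hvol E t / hvol E univ) ^ e.card <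
      ∑ t ∈ Q.parts, (hvol E t / hvol E univ) ^ e.card := by
    intro e he
    simp only [hvol, sum_div]
    exact Finpartition.sum_parts_sum_pow_lt_of_lt hPQ
      (fun v _ => div_pos (by exact_mod_cast hdpos v) hvolV) (hsize e he)
  have hcard : (0 : ℝ) < 1 / E.card := by
    have : 0 < E.card := card_pos.2 ⟨e₀, he₀⟩
    positivity
  unfold hQ
  rw [hedge]
  exact mul_lt_mul_of_pos_left (by linarith [sum_lt_sum_of_nonempty ⟨e₀, he₀⟩ htax]) hcard

end Hypergraph

/-- **Optimal partitions are induced by canonical representatives.**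
Let `H = (V,E)` be a hypergraph with at least one edge, all hyperedges of size at least 2,
and every vertex of positive degree.  If a partition `A` of `V` maximizes the strict
hypergraph modularity `q_H(⬝)` over all partitions of `V`, then `A` is the
connected-component partition of the sub-hypergraph of `H` whose edge set consists exactly
of the edges internal to the parts of `A`; in particular `A ∈ P*(V)` is induced by a
canonical representative. -/
theorem optimal_partition_is_canonical (E : Finset (Finset V)) (hne : E.Nonempty)
    (hsize : ∀ e ∈ E, 2 ≤ e.card) (hdpos : ∀ v : V, 0 < hdeg E v)
    (A : Finpartition (Finset.univ : Finset V))
    (hopt : ∀ B : Finpartition (Finset.univ : Finset V), hQ E B ≤ hQ E A) :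
    A = compPartition (internalEdges E A) := by
  have hE : ∀ e ∈ E, e.Nonempty := fun e he => card_pos.1 (zero_lt_two.trans_le (hsize e he))
  by_contra hA
  have hlt : compPartition (internalEdges E A) < A :=
    (compPartition_internalEdges_le E A).lt_of_ne (Ne.symm hA)
  exact (hopt _).not_gt (hQ_lt_hQ_of_lt E hne hsize hdpos hlt
    (internalEdges_compPartition_internalEdges E hE A))
end
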